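/- arXiv:1303.5869 — 5 statements merged into one kernel-verified Lean document; each statement's English description precedes it below -/
import Mathlib

section
/- For all integers k ≥ 0 the matrices A^k = A^k(0) satisfy the recursion A^{k+1} = A^k·S_r + S_q^T·A^k; consequently A^k = Σ_{j=0}^{k} C(k,j)·(S_q^T)^j·A^0·S_r^{k−j}; moreover, for every z ∈ ℝ and every k ≥ 0 one has the polynomial expansion A^k(z) = Σ_{j=0}^{k} C(k,j)·z^{k−j}·A^j. -/
/-!
At `z = 0` the `(i, j)` entry of `A^k` is `C(k, i)` on the antidiagonal `i + j = k` and `0` off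
it. Right multiplication by `S_r` and left multiplication by `S_qᵀ` shift entries by one column
resp. row, so the recursion is Pascal's rule. These two operations commute, so iterating the
recursion expands `(X ↦ X S_r + S_qᵀ X)^k` binomially. The expansion in `z` is the identity
`C(k, i) C(k - i, j) = C(k, i + j) C(i + j, i)` for the trinomial coefficient.
-/

open Matrix Kronecker

noncomputable section

/-- The `k × k` shift matrix with `(i,j)` entry `δ_{i+1,j}`. -/
def Sh (k : ℕ) : Matrix (Fin k) (Fin k) ℝ :=
  Matrix.of fun i j => if (i : ℕ) + 1 = (j : ℕ) then 1 else 0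

/-- The matrix `A^k(z) ∈ ℝ^{q×r}`, with entries
`k!/(i!·j!·(k−i−j)!)·z^{k−i−j} = C(k,i)·C(k−i,j)·z^{k−i−j}` for `i+j ≤ k`, else `0`. -/
def Amat (q r k : ℕ) (z : ℝ) : Matrix (Fin q) (Fin r) ℝ :=
  Matrix.of fun i j =>
    if (i : ℕ) + (j : ℕ) ≤ k then
      (Nat.choose k i : ℝ) * (Nat.choose (k - i) j : ℝ) * z ^ (k - i - j)
    else 0

/-- The block matrix `𝒜(z) ∈ ℝ^{μq×νr}` with `(i,j)` block `A^{i+j}(z)`. -/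
def Acal (q r μ ν : ℕ) (z : ℝ) : Matrix (Fin μ × Fin q) (Fin ν × Fin r) ℝ :=
  Matrix.of fun p p' => Amat q r ((p.1 : ℕ) + (p'.1 : ℕ)) z p.2 p'.2

/-- `A^0 = e₀ f₀ᵀ ∈ ℝ^{q×r}`. -/
def A0 (q r : ℕ) : Matrix (Fin q) (Fin r) ℝ :=
  Matrix.of fun a b => if (a : ℕ) = 0 ∧ (b : ℕ) = 0 then 1 else 0

/-- The block matrix `Ā ∈ ℝ^{μq×νr}` with `(i,j)` block `(S_qᵀ)^j · A^0 · S_r^i`. -/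
def Abar (q r μ ν : ℕ) : Matrix (Fin μ × Fin q) (Fin ν × Fin r) ℝ :=
  Matrix.of fun p p' =>
    (((Sh q)ᵀ) ^ (p'.1 : ℕ) * A0 q r * (Sh r) ^ (p.1 : ℕ)) p.2 p'.2

/-- `J_k(z) = z·I_k + S_kᵀ`. -/
def Jmat (k : ℕ) (z : ℝ) : Matrix (Fin k) (Fin k) ℝ := z • 1 + (Sh k)ᵀ

/-- The block lower-triangular matrix `𝓛_{m,k}(z)` with `(i,j)` block `C(i,j)·J_k(z)^{i−j}`
for `i ≥ j` and `0` otherwise. -/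
def Lmat (m k : ℕ) (z : ℝ) : Matrix (Fin m × Fin k) (Fin m × Fin k) ℝ :=
  Matrix.of fun p p' =>
    if (p'.1 : ℕ) ≤ (p.1 : ℕ) then
      (Nat.choose p.1 p'.1 : ℝ) * ((Jmat k z) ^ ((p.1 : ℕ) - (p'.1 : ℕ))) p.2 p'.2
    else 0

/-- Natural (block row-major) identification of `Fin (m*n)` with `Fin m × Fin n`. -/
def bIdx (m n : ℕ) : Fin (m * n) → Fin m × Fin n := fun x => finProdFinEquiv.symm x

/-- `M^{(n)}(z) ∈ ℝ^{q×r}`, the `n`-th derivative of `M(z) = u(z)w(z)`,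
whose `(a,b)` entry is the `n`-th derivative of `z^{a+b}`. -/
def Md (q r n : ℕ) (z : ℝ) : Matrix (Fin q) (Fin r) ℝ :=
  Matrix.of fun a b => iteratedDeriv n (fun t : ℝ => t ^ ((a : ℕ) + (b : ℕ))) z

/-- The block matrix `𝓜(z) ∈ ℝ^{μq×νr}` with `(i,j)` block `M^{(i+j)}(z)`. -/
def Mcal (q r μ ν : ℕ) (z : ℝ) : Matrix (Fin μ × Fin q) (Fin ν × Fin r) ℝ :=
  Matrix.of fun p p' => Md q r ((p.1 : ℕ) + (p'.1 : ℕ)) z p.2 p'.2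

/-- The block matrix `𝓝(z) ∈ ℝ^{μq×νr}` with `(i,j)` block `M^{(i+j)}(z)/(i!·j!)`. -/
def Ncal (q r μ ν : ℕ) (z : ℝ) : Matrix (Fin μ × Fin q) (Fin ν × Fin r) ℝ :=
  Matrix.of fun p p' =>
    Md q r ((p.1 : ℕ) + (p'.1 : ℕ)) z p.2 p'.2 /
      ((Nat.factorial (p.1 : ℕ) : ℝ) * (Nat.factorial (p'.1 : ℕ) : ℝ))

/-- `𝓝^0(z) = (M(z)/0!, …, M^{(ν−1)}(z)/(ν−1)!) ∈ ℝ^{q×νr}`. -/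
def Ncal0 (q r ν : ℕ) (z : ℝ) : Matrix (Fin q) (Fin ν × Fin r) ℝ :=
  Matrix.of fun a p => Md q r (p.1 : ℕ) z a p.2 / (Nat.factorial (p.1 : ℕ) : ℝ)

/-- `𝓜^0(z) = (M(z), M'(z), …, M^{(ν−1)}(z)) ∈ ℝ^{q×νr}`. -/
def M0cal (q r ν : ℕ) (z : ℝ) : Matrix (Fin q) (Fin ν × Fin r) ℝ :=
  Matrix.of fun a p => Md q r (p.1 : ℕ) z a p.2

/-- `U_q(z)` with columns `u(z), u'(z), …, u^{(q−1)}(z)`, where `u_a(z) = z^a`. -/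
def Uq (q : ℕ) (z : ℝ) : Matrix (Fin q) (Fin q) ℝ :=
  Matrix.of fun a j => iteratedDeriv (j : ℕ) (fun t : ℝ => t ^ (a : ℕ)) z

/-- `W_r(z)` with rows `w(z), w'(z), …, w^{(r−1)}(z)`, where `w_b(z) = z^b`. -/
def Wrm (r : ℕ) (z : ℝ) : Matrix (Fin r) (Fin r) ℝ :=
  Matrix.of fun i b => iteratedDeriv (i : ℕ) (fun t : ℝ => t ^ (b : ℕ)) z

/-- `Ũ_m(z)` with entries `C(i,j)·z^{i−j}` for `i ≥ j` and `0` otherwise. -/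
def Ut (m : ℕ) (z : ℝ) : Matrix (Fin m) (Fin m) ℝ :=
  Matrix.of fun i j =>
    if (j : ℕ) ≤ (i : ℕ) then (Nat.choose i j : ℝ) * z ^ ((i : ℕ) - (j : ℕ)) else 0

/-- `W̃_m(z)` with entries `C(j,i)·z^{j−i}` for `j ≥ i` and `0` otherwise. -/
def Wt (m : ℕ) (z : ℝ) : Matrix (Fin m) (Fin m) ℝ :=
  Matrix.of fun i j =>
    if (i : ℕ) ≤ (j : ℕ) then (Nat.choose j i : ℝ) * z ^ ((j : ℕ) - (i : ℕ)) else 0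

/-- `D_m`, the diagonal matrix with `(i,i)` entry `i!`. -/
def Dm (m : ℕ) : Matrix (Fin m) (Fin m) ℝ :=
  Matrix.diagonal fun i => (Nat.factorial (i : ℕ) : ℝ)

/-- The block matrix `Â` whose `(i,j)` block has `(k,l)` entry `C(i+j,i)` if `k+l = i+j`, else 0. -/
def Ahat (q r μ ν : ℕ) : Matrix (Fin μ × Fin q) (Fin ν × Fin r) ℝ :=
  Matrix.of fun p p' =>
    if (p.2 : ℕ) + (p'.2 : ℕ) = (p.1 : ℕ) + (p'.1 : ℕ) then
      (Nat.choose ((p.1 : ℕ) + (p'.1 : ℕ)) (p.1 : ℕ) : ℝ)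
    else 0

/-- `F(z) ∈ ℝ^{r×(r−1)}` with `F_{ii} = −z`, `F_{i+1,i} = 1`, else `0`. -/
def Fm (r : ℕ) (z : ℝ) : Matrix (Fin r) (Fin (r - 1)) ℝ :=
  Matrix.of fun a b =>
    if (a : ℕ) = (b : ℕ) then -z else if (a : ℕ) = (b : ℕ) + 1 then 1 else 0

/-- `F'(z)`, the (constant) derivative of `F(z)`: `−1` on the diagonal, `0` elsewhere. -/
def Fm' (r : ℕ) : Matrix (Fin r) (Fin (r - 1)) ℝ :=
  Matrix.of fun a b => if (a : ℕ) = (b : ℕ) then -1 else 0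

/-- `G(z) ∈ ℝ^{r×r}` with entries `z^{j−i−1}` for `j > i`, else `0`. -/
def Gm (r : ℕ) (z : ℝ) : Matrix (Fin r) (Fin r) ℝ :=
  Matrix.of fun i j => if (i : ℕ) < (j : ℕ) then z ^ ((j : ℕ) - (i : ℕ) - 1) else 0

/-- entrywise `j`-th derivative `G^{(n)}(z)`. -/
def Gd (r n : ℕ) (z : ℝ) : Matrix (Fin r) (Fin r) ℝ :=
  Matrix.of fun i j =>
    iteratedDeriv n (fun t : ℝ => if (i : ℕ) < (j : ℕ) then t ^ ((j : ℕ) - (i : ℕ) - 1) else 0) z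

/-- the row vector `w(z)` with entries `z^b`. -/
def wv (r : ℕ) (z : ℝ) : Fin r → ℝ := fun b => z ^ (b : ℕ)

/-- the `n`-th derivative `w^{(n)}(z)`. -/
def wd (r n : ℕ) (z : ℝ) : Fin r → ℝ := fun b => iteratedDeriv n (fun t : ℝ => t ^ (b : ℕ)) z

/-- the `n`-th derivative `u^{(n)}(z)` of the column vector `u(z)` with entries `z^a`. -/
def ud (q n : ℕ) (z : ℝ) : Fin q → ℝ := fun a => iteratedDeriv n (fun t : ℝ => t ^ (a : ℕ)) z

/-- The matrix `K̄(z)`: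
`[[I_q⊗F(z) + S_q⊗F'(z), −ℓ_q fᵀ ⊗ G(z)], [0, I_{ν−q}⊗I_r − S_{ν−q}⊗G(z)]]`. -/
def Kbar (q r ν : ℕ) (z : ℝ) :
    Matrix (Fin ν × Fin r) ((Fin q × Fin (r - 1)) ⊕ (Fin (ν - q) × Fin r)) ℝ :=
  Matrix.of fun p s =>
    match s with
    | Sum.inl c =>
        (if (p.1 : ℕ) = (c.1 : ℕ) then Fm r z p.2 c.2 else 0) +
        (if (p.1 : ℕ) + 1 = (c.1 : ℕ) then Fm' r p.2 c.2 else 0)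
    | Sum.inr c =>
        (if (p.1 : ℕ) = q + (c.1 : ℕ) then (if p.2 = c.2 then 1 else 0) else 0) +
        (if (p.1 : ℕ) + 1 = q + (c.1 : ℕ) then -(Gm r z p.2 c.2) else 0)

/-- `F_k(z) ∈ ℝ^{(r−k)×(r−1−k)}`. -/
def Fmk (r k : ℕ) (z : ℝ) : Matrix (Fin (r - k)) (Fin (r - (k + 1))) ℝ :=
  Matrix.of fun a b =>
    if (a : ℕ) = (b : ℕ) then -z else if (a : ℕ) = (b : ℕ) + 1 then 1 else 0

/-- `F_k'(z)`, the (constant) derivative of `F_k(z)`. -/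
def Fmk' (r k : ℕ) : Matrix (Fin (r - k)) (Fin (r - (k + 1))) ℝ :=
  Matrix.of fun a b => if (a : ℕ) = (b : ℕ) then -1 else 0

/-- `K_k(z) = I_ν ⊗ F_k(z) + S_ν ⊗ F_k'(z)`. -/
def Kk (ν r k : ℕ) (z : ℝ) :
    Matrix (Fin ν × Fin (r - k)) (Fin ν × Fin (r - (k + 1))) ℝ :=
  (1 : Matrix (Fin ν) (Fin ν) ℝ) ⊗ₖ Fmk r k z + Sh ν ⊗ₖ Fmk' r k

/-- `KP ν r z m = K_0(z) · K_1(z) ⋯ K_{m−1}(z)` (so `KP ν r z μ = 𝒦^{μ−1}(z)`). -/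
def KP (ν r : ℕ) (z : ℝ) : (m : ℕ) → Matrix (Fin ν × Fin r) (Fin ν × Fin (r - m)) ℝ
  | 0 => Matrix.of fun p p' => if p.1 = p'.1 ∧ (p.2 : ℕ) = (p'.2 : ℕ) then 1 else 0
  | m + 1 => KP ν r z m * Kk ν r m z

/-- `𝒜^0 = (A^0, A^1, …, A^{ν−1}) ∈ ℝ^{q×νr}` (at `z = 0`). -/
def A0row (q r ν : ℕ) : Matrix (Fin q) (Fin ν × Fin r) ℝ :=
  Matrix.of fun a p =>
    if (a : ℕ) + (p.2 : ℕ) = (p.1 : ℕ) then (Nat.choose (p.1 : ℕ) (a : ℕ) : ℝ) else 0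

/-- `B^k ∈ ℝ^{r×q}` with entries `(−1)^i·C(q,k+1)` if `i+j = k`, else `0`. -/
def Bk (q r k : ℕ) : Matrix (Fin r) (Fin q) ℝ :=
  Matrix.of fun i j =>
    if (i : ℕ) + (j : ℕ) = k then (-1 : ℝ) ^ (i : ℕ) * (Nat.choose q (k + 1) : ℝ) else 0

/-- `𝓑^0 ∈ ℝ^{νr×q}`, the blocks `B^0, …, B^{ν−1}` stacked vertically. -/
def B0cal (q r ν : ℕ) : Matrix (Fin ν × Fin r) (Fin q) ℝ :=
  Matrix.of fun p j => Bk q r (p.1 : ℕ) p.2 j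

/-- Left multiplication by a fixed matrix, as a linear map. -/
def mulLeftLM {m n p : Type*} [Fintype n] (M : Matrix m n ℝ) :
    Matrix n p ℝ →ₗ[ℝ] Matrix m p ℝ where
  toFun X := M * X
  map_add' X Y := Matrix.mul_add M X Y
  map_smul' c X := by simp [Matrix.mul_smul]

/-- The right inverse `𝓜(z)⁺`. -/
def Mplus (q r μ ν : ℕ) (z : ℝ) : Matrix (Fin ν × Fin r) (Fin μ × Fin q) ℝ :=
  ((1 : Matrix (Fin ν) (Fin ν) ℝ) ⊗ₖ (Wrm r z)⁻¹) * (Lmat ν r 0)⁻¹ *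
    (Abar q r μ ν)ᵀ * (Lmat μ q 0)⁻¹ * ((1 : Matrix (Fin μ) (Fin μ) ℝ) ⊗ₖ (Uq q z)⁻¹)

lemma amat_zero_apply (q r k : ℕ) (i : Fin q) (j : Fin r) :
    Amat q r k 0 i j = if (i : ℕ) + j = k then (k.choose i : ℝ) else 0 := by
  rw [Amat, of_apply]
  split_ifs
  · rw [show k - i - j = 0 by omega, show k - i = j by omega, Nat.choose_self]
    simp
  · rw [zero_pow (by omega), mul_zero]
  · omega
  · rfl

lemma amat_apply_eq_choose_mul (q r k : ℕ) (z : ℝ) (i : Fin q) (j : Fin r) :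
    Amat q r k z i j =
      if (i : ℕ) + j ≤ k then
        (k.choose (i + j) : ℝ) * z ^ (k - (i + j)) * ((i + j : ℕ).choose i : ℝ)
      else 0 := by
  rw [Amat, of_apply]
  split_ifs with h
  · have hchoose := Nat.choose_mul (n := k) (k := i + j) (s := i) (Nat.le_add_right _ _)
    rw [Nat.add_sub_cancel_left] at hchoose
    simp only [Nat.sub_sub, mul_right_comm _ (z ^ _), ← Nat.cast_mul, hchoose]
  · rfl

lemma mul_sh_apply {m n : ℕ} (M : Matrix (Fin m) (Fin n) ℝ) (i : Fin m) (j : Fin n) :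
    (M * Sh n) i j = if h : 0 < (j : ℕ) then M i ⟨j - 1, by omega⟩ else 0 := by
  rw [mul_apply]
  split_ifs with h
  · rw [Finset.sum_eq_single ⟨j - 1, by omega⟩]
    · simp [Sh, Nat.sub_add_cancel h]
    · intro b _ hb
      have : (b : ℕ) + 1 ≠ j := fun hc => hb (by ext; simp; omega)
      simp [Sh, this]
    · simp
  · refine Finset.sum_eq_zero fun b _ => ?_
    simp [Sh, show (b : ℕ) + 1 ≠ j by omega]

lemma shT_mul_apply {m n : ℕ} (M : Matrix (Fin m) (Fin n) ℝ) (i : Fin m) (j : Fin n) :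
    ((Sh m)ᵀ * M) i j = if h : 0 < (i : ℕ) then M ⟨i - 1, by omega⟩ j else 0 := by
  rw [← transpose_apply ((Sh m)ᵀ * M), transpose_mul, transpose_transpose, mul_sh_apply]
  rfl

theorem amat_zero_succ (q r k : ℕ) :
    Amat q r (k + 1) 0 = Amat q r k 0 * Sh r + (Sh q)ᵀ * Amat q r k 0 := by
  ext i j
  rw [Matrix.add_apply, mul_sh_apply, shT_mul_apply]
  simp only [amat_zero_apply]
  -- Pascal's rule `C(k+1, a+1) = C(k, a) + C(k, a+1)` along the antidiagonal `i + j = k + 1`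
  rcases i with ⟨_ | a, ha⟩ <;> rcases j with ⟨_ | b, hb⟩ <;>
    simp [Nat.choose_succ_succ', ← add_assoc, add_right_comm _ 1] <;>
    split_ifs <;> subst_vars <;> simp [add_comm]

theorem Matrix.eq_sum_choose_of_succ_eq {m n R : Type*} [Fintype m] [DecidableEq m]
    [Fintype n] [DecidableEq n] [Semiring R] (X : ℕ → Matrix m n R) (C : Matrix m m R)
    (B : Matrix n n R) (hX : ∀ k, X (k + 1) = X k * B + C * X k) (k : ℕ) :
    X k = ∑ j ∈ Finset.range (k + 1), k.choose j • (C ^ j * X 0 * B ^ (k - j)) := by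
  induction k with
  | zero => simp
  | succ k ih =>
    rw [Finset.sum_choose_succ_nsmul (fun i j => C ^ i * X 0 * B ^ j), hX, ih,
      Matrix.sum_mul, Matrix.mul_sum]
    congr 1 <;> refine Finset.sum_congr rfl fun j hj => ?_
    · rw [Matrix.smul_mul, Matrix.mul_assoc, ← pow_succ,
        Nat.sub_add_comm (Finset.mem_range_succ_iff.mp hj)]
    · rw [Matrix.mul_smul, ← Matrix.mul_assoc, ← Matrix.mul_assoc, ← pow_succ']

theorem amat_eq_sum_choose_smul_amat_zero (q r k : ℕ) (z : ℝ) :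
    Amat q r k z =
      ∑ j ∈ Finset.range (k + 1), ((k.choose j : ℝ) * z ^ (k - j)) • Amat q r j 0 := by
  ext i j
  rw [amat_apply_eq_choose_mul]
  simp only [Matrix.sum_apply, Matrix.smul_apply, amat_zero_apply, smul_eq_mul, mul_ite, mul_zero,
    Finset.sum_ite_eq, Finset.mem_range_succ_iff]

theorem statement0_general (q r : ℕ) :
    (∀ k : ℕ, Amat q r (k + 1) 0 = Amat q r k 0 * Sh r + (Sh q)ᵀ * Amat q r k 0) ∧
    (∀ k : ℕ, Amat q r k 0 =
      ∑ j ∈ Finset.range (k + 1),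
        (Nat.choose k j : ℝ) • (((Sh q)ᵀ) ^ j * Amat q r 0 0 * (Sh r) ^ (k - j))) ∧
    (∀ (z : ℝ) (k : ℕ), Amat q r k z =
      ∑ j ∈ Finset.range (k + 1),
        ((Nat.choose k j : ℝ) * z ^ (k - j)) • Amat q r j 0) :=
  ⟨amat_zero_succ q r, fun k => by
    simpa only [Nat.cast_smul_eq_nsmul] using
      Matrix.eq_sum_choose_of_succ_eq (fun k => Amat q r k 0) _ _ (amat_zero_succ q r) k,
    fun z k => amat_eq_sum_choose_smul_amat_zero q r k z⟩

theorem statement0 (q r : ℕ) (hq : 0 < q) (hr : 0 < r) :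
    (∀ k : ℕ, Amat q r (k + 1) 0 = Amat q r k 0 * Sh r + (Sh q)ᵀ * Amat q r k 0) ∧
    (∀ k : ℕ, Amat q r k 0 =
      ∑ j ∈ Finset.range (k + 1),
        (Nat.choose k j : ℝ) • (((Sh q)ᵀ) ^ j * Amat q r 0 0 * (Sh r) ^ (k - j))) ∧
    (∀ (z : ℝ) (k : ℕ), Amat q r k z =
      ∑ j ∈ Finset.range (k + 1),
        ((Nat.choose k j : ℝ) * z ^ (k - j)) • Amat q r j 0) :=
  statement0_general q r
end
end

section
/- For every z ∈ ℝ the factorization 𝒜(z) = 𝓛_{μ,q}(z) · Ā · 𝓛_{ν,r}(z)^T holds. In particular 𝒜(0) = 𝓛_{μ,q}(0) · Ā · 𝓛_{ν,r}(0)^T, and if μq = νr then det 𝒜(z) = det Ā for all z. -/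
open Matrix Kronecker

noncomputable section

/-!
Let `X` and `Y` be the commuting operators `B ↦ S_qᵀ B` and `B ↦ B S_r` on `q × r` matrices.
Since `X^a Y^b A^0 = e_a f_bᵀ`, the trinomial expansion gives `A^k(z) = (z + X + Y)^k A^0`.
Left multiplication by `J_q(z)` is `z + X` and right multiplication by `J_r(z)ᵀ` is `z + Y`, so the
`(i, j)` block of `𝓛 Ā 𝓛ᵀ` is
`∑ C(i,i') C(j,j') (z + X)^(i-i') Y^i' X^j' (z + Y)^(j-j') A^0 = (z + X + Y)^i (z + X + Y)^j A^0`,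
which is `A^(i+j)(z)` by the binomial theorem. For the determinant, `𝓛` is unitriangular for the
lexicographic order on block indices.
-/

open Finset

section MulLM

variable {l m n : Type*} [Fintype m]

def mulRightLM (M : Matrix m n ℝ) : Matrix l m ℝ →ₗ[ℝ] Matrix l n ℝ where
  toFun X := X * M
  map_add' X Y := Matrix.add_mul X Y M
  map_smul' c X := Matrix.smul_mul c X M

@[simp]
lemma mulLeftLM_apply (M : Matrix l m ℝ) (X : Matrix m n ℝ) : mulLeftLM M X = M * X := rfl

@[simp]
lemma mulRightLM_apply (M : Matrix m n ℝ) (X : Matrix l m ℝ) : mulRightLM M X = X * M := rfl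

lemma commute_mulRightLM_mulLeftLM [Fintype n] (P : Matrix m m ℝ) (Q : Matrix n n ℝ) :
    Commute (mulRightLM Q : Module.End ℝ (Matrix m n ℝ)) (mulLeftLM P) :=
  LinearMap.ext fun X => Matrix.mul_assoc P X Q

variable [DecidableEq m]

lemma mulLeftLM_pow_apply (P : Matrix m m ℝ) (k : ℕ) (X : Matrix m n ℝ) :
    ((mulLeftLM P : Module.End ℝ (Matrix m n ℝ)) ^ k) X = P ^ k * X := by
  induction k with
  | zero => simp
  | succ k ih =>
    rw [pow_succ', Module.End.mul_apply, ih, mulLeftLM_apply, pow_succ', Matrix.mul_assoc]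

lemma mulRightLM_pow_apply (Q : Matrix m m ℝ) (k : ℕ) (X : Matrix l m ℝ) :
    ((mulRightLM Q : Module.End ℝ (Matrix l m ℝ)) ^ k) X = X * Q ^ k := by
  induction k with
  | zero => simp
  | succ k ih =>
    rw [pow_succ', Module.End.mul_apply, ih, mulRightLM_apply, pow_succ, Matrix.mul_assoc]

end MulLM

lemma Sh_pow_apply (k t : ℕ) (a b : Fin k) :
    (Sh k ^ t) a b = if (a : ℕ) + t = b then 1 else 0 := by
  induction t generalizing b with
  | zero => simp [Matrix.one_apply, Fin.ext_iff]
  | succ t ih =>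
    rw [pow_succ, Matrix.mul_apply]
    simp only [ih]
    simp only [Sh, Matrix.of_apply, ite_mul, one_mul, zero_mul]
    rw [Fin.sum_univ_eq_sum_range (fun c => if (a : ℕ) + t = c then
      if c + 1 = (b : ℕ) then (1 : ℝ) else 0 else 0), Finset.sum_ite_eq]
    have := b.isLt
    split_ifs <;> simp_all <;> omega

lemma Jmat_pow_apply (k : ℕ) (z : ℝ) (n : ℕ) (a c : Fin k) :
    (Jmat k z ^ n) a c =
      if (c : ℕ) ≤ a then (n.choose (a - c) : ℝ) * z ^ (n - (a - c)) else 0 := by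
  have hcomm : Commute (Sh k)ᵀ (z • (1 : Matrix (Fin k) (Fin k) ℝ)) :=
    (Commute.one_right _).smul_right z
  rw [Jmat, add_comm, hcomm.add_pow, Matrix.sum_apply]
  simp only [smul_pow, one_pow, Matrix.mul_smul, ← nsmul_eq_mul', ← Matrix.transpose_pow,
    Matrix.smul_apply, Matrix.transpose_apply, Sh_pow_apply, smul_eq_mul, nsmul_eq_mul, mul_ite,
    mul_one, mul_zero]
  rw [Finset.sum_eq_single ((a : ℕ) - c)]
  · split_ifs <;> first | rfl | (exfalso; omega)
  · intro x _ hx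
    rw [if_neg (by omega)]
  · intro hx
    rw [mem_range, not_lt] at hx
    split_ifs <;> simp [Nat.choose_eq_zero_of_lt (Nat.lt_of_succ_le hx)]

lemma commute_Sh_transpose_Jmat (r : ℕ) (z : ℝ) : Commute (Sh r) (Jmat r z)ᵀ := by
  rw [Jmat, Matrix.transpose_add, Matrix.transpose_smul, Matrix.transpose_one,
    Matrix.transpose_transpose]
  exact ((Commute.one_right _).smul_right z).add_right (Commute.refl _)

lemma mul_A0_mul_apply {q r : ℕ} (P : Matrix (Fin q) (Fin q) ℝ) (Q : Matrix (Fin r) (Fin r) ℝ)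
    (a : Fin q) (b : Fin r) : (P * A0 q r * Q) a b = P a ⟨0, a.pos⟩ * Q ⟨0, b.pos⟩ b := by
  have hq (x : Fin q) : (x : ℕ) = 0 ↔ x = ⟨0, a.pos⟩ := by simp [Fin.ext_iff]
  have hr (y : Fin r) : (y : ℕ) = 0 ↔ y = ⟨0, b.pos⟩ := by simp [Fin.ext_iff]
  simp [Matrix.mul_apply, A0, ite_and, hq, hr]

def trinomialOp (q r : ℕ) (z : ℝ) : Module.End ℝ (Matrix (Fin q) (Fin r) ℝ) :=
  mulLeftLM (Sh q)ᵀ + mulRightLM (Jmat r z)ᵀ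

lemma trinomialOp_eq (q r : ℕ) (z : ℝ) :
    trinomialOp q r z = mulRightLM (Sh r) + mulLeftLM (Jmat q z) := by
  refine LinearMap.ext fun B => ?_
  simp only [trinomialOp, Jmat, LinearMap.add_apply, mulLeftLM_apply, mulRightLM_apply,
    Matrix.transpose_add, Matrix.transpose_smul, Matrix.transpose_one, Matrix.transpose_transpose,
    Matrix.add_mul, Matrix.mul_add, Matrix.smul_mul, Matrix.mul_smul, Matrix.one_mul,
    Matrix.mul_one]
  abel

lemma Amat_eq_trinomialOp_pow_apply (q r k : ℕ) (z : ℝ) :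
    Amat q r k z = (trinomialOp q r z ^ k) (A0 q r) := by
  ext a b
  rw [trinomialOp, (commute_mulRightLM_mulLeftLM _ _).symm.add_pow]
  simp only [LinearMap.sum_apply, Module.End.mul_apply, Module.End.natCast_apply,
    mulLeftLM_pow_apply, mulRightLM_pow_apply, Matrix.sum_apply, Matrix.smul_mul, Matrix.mul_smul,
    ← Matrix.mul_assoc, Matrix.smul_apply, mul_A0_mul_apply, ← Matrix.transpose_pow,
    Matrix.transpose_apply, Sh_pow_apply, Jmat_pow_apply, zero_add, zero_le, if_true, Nat.sub_zero,
    nsmul_eq_mul, ite_mul, one_mul, zero_mul, mul_ite, mul_zero, Finset.sum_ite_eq', mem_range]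
  simp only [Amat, Matrix.of_apply]
  split_ifs with hab hak
  · rw [Nat.sub_sub, mul_assoc]
  · omega
  · rw [Nat.choose_eq_zero_of_lt (by omega : k - a < b)]
    simp
  · rfl

lemma mul_mul_transpose_apply_prod {ι κ α β R : Type*} [Fintype ι] [Fintype κ] [Fintype α]
    [Fintype β] [Semiring R] (P : Matrix (ι × α) (ι × α) R) (B : Matrix (ι × α) (κ × β) R)
    (Q : Matrix (κ × β) (κ × β) R) (i : ι) (a : α) (j : κ) (b : β) :
    (P * B * Qᵀ) (i, a) (j, b) = ∑ i', ∑ j', (of (fun a a' => P (i, a) (i', a')) *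
      of (fun a' b' => B (i', a') (j', b')) * (of fun b b' => Q (j, b) (j', b'))ᵀ) a b := by
  simp only [Matrix.mul_apply, Fintype.sum_prod_type, Matrix.transpose_apply, Matrix.of_apply,
    Finset.sum_mul]
  rw [Finset.sum_congr rfl fun _ _ => Finset.sum_comm, Finset.sum_comm]

lemma Lmat_block (m k : ℕ) (z : ℝ) (i i' : Fin m) :
    (of fun a a' => Lmat m k z (i, a) (i', a')) =
      ((i : ℕ).choose i' : ℝ) • Jmat k z ^ ((i : ℕ) - i') := by
  ext a a'
  simp only [Lmat, Matrix.of_apply]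
  split_ifs with h
  · rfl
  · simp [Nat.choose_eq_zero_of_lt (not_le.mp h)]

lemma Abar_block (q r μ ν : ℕ) (i' : Fin μ) (j' : Fin ν) :
    (of fun a' b' => Abar q r μ ν (i', a') (j', b')) =
      (Sh q)ᵀ ^ (j' : ℕ) * A0 q r * Sh r ^ (i' : ℕ) :=
  rfl

lemma Lmat_Abar_block_product (q r : ℕ) (z : ℝ) (i i' j j' : ℕ) :
    ((i.choose i' : ℝ) • Jmat q z ^ (i - i')) * ((Sh q)ᵀ ^ j' * A0 q r * Sh r ^ i') *
        ((j.choose j' : ℝ) • Jmat r z ^ (j - j'))ᵀ =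
      ((mulRightLM (Sh r) : Module.End ℝ (Matrix (Fin q) (Fin r) ℝ)) ^ i' *
          (mulLeftLM (Jmat q z) : Module.End ℝ (Matrix (Fin q) (Fin r) ℝ)) ^ (i - i') *
          ((i.choose i' : ℕ) : Module.End ℝ (Matrix (Fin q) (Fin r) ℝ)))
        (((mulLeftLM (Sh q)ᵀ : Module.End ℝ (Matrix (Fin q) (Fin r) ℝ)) ^ j' *
          (mulRightLM (Jmat r z)ᵀ : Module.End ℝ (Matrix (Fin q) (Fin r) ℝ)) ^ (j - j') *
          ((j.choose j' : ℕ) : Module.End ℝ (Matrix (Fin q) (Fin r) ℝ))) (A0 q r)) := by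
  simp only [Module.End.mul_apply, Module.End.natCast_apply, mulLeftLM_pow_apply,
    mulRightLM_pow_apply, ← Nat.cast_smul_eq_nsmul ℝ, Matrix.transpose_smul, Matrix.transpose_pow,
    Matrix.smul_mul, Matrix.mul_smul, smul_smul, Matrix.mul_assoc,
    ((commute_Sh_transpose_Jmat r z).pow_pow i' (j - j')).eq]
  rw [mul_comm]

theorem Commute.add_pow_eq_sum_fin {R : Type*} [Semiring R] {x y : R} (h : Commute x y)
    {i n : ℕ} (hi : i < n) :
    ∑ c : Fin n, x ^ (c : ℕ) * y ^ (i - c) * (i.choose c : R) = (x + y) ^ i := by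
  rw [Fin.sum_univ_eq_sum_range (fun c => x ^ c * y ^ (i - c) * (i.choose c : R)), h.add_pow]
  refine (Finset.sum_subset (range_subset_range.2 hi) fun c _ hc => ?_).symm
  rw [Nat.choose_eq_zero_of_lt (by simpa using hc), Nat.cast_zero, mul_zero]

theorem Acal_eq_Lmat_mul_Abar_mul_transpose (q r μ ν : ℕ) (z : ℝ) :
    Acal q r μ ν z = Lmat μ q z * Abar q r μ ν * (Lmat ν r z)ᵀ := by
  ext ⟨i, a⟩ ⟨j, b⟩
  rw [mul_mul_transpose_apply_prod]
  simp only [← Matrix.sum_apply, Lmat_block, Abar_block, Lmat_Abar_block_product]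
  simp only [← map_sum, ← LinearMap.sum_apply]
  rw [(commute_mulRightLM_mulLeftLM _ _).add_pow_eq_sum_fin i.isLt,
    (commute_mulRightLM_mulLeftLM _ _).symm.add_pow_eq_sum_fin j.isLt, ← trinomialOp_eq,
    ← trinomialOp, ← Module.End.mul_apply, ← pow_add, ← Amat_eq_trinomialOp_pow_apply]
  rfl

lemma det_Lmat (m k : ℕ) (z : ℝ) : (Lmat m k z).det = 1 := by
  rw [← det_submatrix_equiv_self ofLex, det_of_isLowerTriangular]
  · refine Finset.prod_eq_one fun p _ => ?_
    simp [Lmat]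
  · intro p p' hlt
    rw [OrderDual.toDual_lt_toDual, Prod.Lex.lt_iff] at hlt
    simp only [submatrix_apply, Lmat, of_apply, Jmat_pow_apply]
    rcases hlt with h | ⟨h, h'⟩
    · rw [if_neg (not_le.mpr (Fin.lt_def.mp h))]
    · rw [h, if_neg (not_le.mpr (Fin.lt_def.mp h')), mul_zero, ite_self]

theorem statement1_general (q r μ ν : ℕ) :
    (∀ z : ℝ, Acal q r μ ν z = Lmat μ q z * Abar q r μ ν * (Lmat ν r z)ᵀ) ∧
    (Acal q r μ ν 0 = Lmat μ q 0 * Abar q r μ ν * (Lmat ν r 0)ᵀ) ∧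
    (∀ (h : μ * q = ν * r) (z : ℝ),
      ((Acal q r μ ν z).submatrix (bIdx μ q) (fun x => bIdx ν r (Fin.cast h x))).det =
      ((Abar q r μ ν).submatrix (bIdx μ q) (fun x => bIdx ν r (Fin.cast h x))).det) := by
  refine ⟨Acal_eq_Lmat_mul_Abar_mul_transpose q r μ ν,
    Acal_eq_Lmat_mul_Abar_mul_transpose q r μ ν 0, fun h z => ?_⟩
  let e₁ : Fin (μ * q) ≃ Fin μ × Fin q := finProdFinEquiv.symm
  let e₂ : Fin (μ * q) ≃ Fin ν × Fin r := (finCongr h).trans finProdFinEquiv.symm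
  change ((Acal q r μ ν z).submatrix e₁ e₂).det = ((Abar q r μ ν).submatrix e₁ e₂).det
  rw [Acal_eq_Lmat_mul_Abar_mul_transpose, ← submatrix_mul_equiv _ _ _ e₂,
    ← submatrix_mul_equiv _ _ _ e₁, det_mul, det_mul, det_submatrix_equiv_self,
    det_submatrix_equiv_self, det_transpose, det_Lmat, det_Lmat, one_mul, mul_one]

theorem statement1 (q r μ ν : ℕ) (hq : 0 < q) (hr : 0 < r) (hμ : 0 < μ) (hν : 0 < ν) :
    (∀ z : ℝ, Acal q r μ ν z = Lmat μ q z * Abar q r μ ν * (Lmat ν r z)ᵀ) ∧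
    (Acal q r μ ν 0 = Lmat μ q 0 * Abar q r μ ν * (Lmat ν r 0)ᵀ) ∧
    (∀ (h : μ * q = ν * r) (z : ℝ),
      ((Acal q r μ ν z).submatrix (bIdx μ q) (fun x => bIdx ν r (Fin.cast h x))).det =
      ((Abar q r μ ν).submatrix (bIdx μ q) (fun x => bIdx ν r (Fin.cast h x))).det) :=
  statement1_general q r μ ν
end
end

section
/- For every z ∈ ℝ the factorization 𝓜(z) = (I_μ ⊗ U_q(z)) · 𝒜(0) · (I_ν ⊗ W_r(z)) holds, where ⊗ denotes the Kronecker product. Consequently, for every z the rank of 𝓜(z) equals the rank of 𝒜(0), namely min{μ,r}·min{ν,q}. -/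
open Matrix Kronecker

noncomputable section

/-!
Since `M = u w`, Leibniz' rule gives `M^{(k)} = ∑_{c+d=k} C(k,c) u^{(c)} w^{(d)}`, and
`u^{(c)}` is the `c`-th column of `U_q` (zero for `c ≥ q`), `w^{(d)}` the `d`-th row of `W_r`;
hence `M^{(k)}(z) = U_q(z) A^k(0) W_r(z)` blockwise. `U_q` and `W_r` are triangular with
diagonal entries `a!`, so `rank 𝓜(z) = rank 𝒜(0)`. Finally `𝒜(0)` factors through an index set
of size `min{μ,r}·min{ν,q}` by the binomial theorem, and each factor contains a unitriangular
square submatrix of that size.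
-/

open Finset

theorem Matrix.one_kronecker_mul_mul_one_kronecker_apply {R l m m' n o o' : Type*}
    [CommSemiring R] [Fintype l] [DecidableEq l] [Fintype m'] [Fintype n] [DecidableEq n]
    [Fintype o'] (U : Matrix m m' R) (B : Matrix (l × m') (n × o') R) (W : Matrix o' o R)
    (i : l) (a : m) (j : n) (b : o) :
    (((1 : Matrix l l R) ⊗ₖ U) * B * ((1 : Matrix n n R) ⊗ₖ W)) (i, a) (j, b) =
      (U * B.submatrix (Prod.mk i) (Prod.mk j) * W) a b := by
  simp [mul_apply, Fintype.sum_prod_type, one_apply, ite_mul, mul_ite, sum_mul]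

theorem Matrix.BlockTriangular.det_eq_one {R m α : Type*} [CommRing R] [Fintype m]
    [DecidableEq m] [LinearOrder α] {M : Matrix m m R} {b : m → α} (hM : M.BlockTriangular b)
    (hblock : ∀ i j, b i = b j → M i j = (1 : Matrix m m R) i j) : M.det = 1 := by
  rw [hM.det]
  refine prod_eq_one fun k _ => ?_
  have hk : M.toSquareBlock b k = 1 := by
    ext i j
    rw [toSquareBlock_def, of_apply, hblock i j (i.2.trans j.2.symm)]
    simp only [one_apply, Subtype.ext_iff]
  rw [hk, det_one]

theorem Matrix.rank_mul_eq_card_of_isUnit_submatrix {R m n k : Type*} [Field R] [Fintype n]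
    [Fintype k] [DecidableEq k] (X : Matrix m k R) (Y : Matrix k n R) (f : k → m) (g : k → n)
    (hX : IsUnit (X.submatrix f id)) (hY : IsUnit (Y.submatrix id g)) :
    (X * Y).rank = Fintype.card k := by
  refine le_antisymm ((rank_mul_le_left X Y).trans (rank_le_card_width X)) ?_
  calc Fintype.card k = (X.submatrix f id * Y.submatrix id g).rank :=
        (rank_of_isUnit _ (hX.mul hY)).symm
    _ = ((X * Y).submatrix f g).rank := by
        rw [submatrix_mul _ _ _ _ _ Function.bijective_id]
    _ ≤ (X * Y).rank := rank_submatrix_le _ _ _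

lemma Uq_apply (q : ℕ) (z : ℝ) (a c : Fin q) :
    Uq q z a c = ((a : ℕ).descFactorial c : ℝ) * z ^ ((a : ℕ) - c) :=
  iteratedDeriv_pow _ _

lemma Wrm_apply (r : ℕ) (z : ℝ) (d b : Fin r) :
    Wrm r z d b = ((b : ℕ).descFactorial d : ℝ) * z ^ ((b : ℕ) - d) :=
  iteratedDeriv_pow _ _

lemma Amat_zero_apply (q r k : ℕ) (a : Fin q) (b : Fin r) :
    Amat q r k 0 a b = if ((a : ℕ), (b : ℕ)) ∈ antidiagonal k then (k.choose a : ℝ) else 0 := by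
  simp only [Amat, of_apply, HasAntidiagonal.mem_antidiagonal]
  rcases lt_trichotomy ((a : ℕ) + b) k with h | h | h
  · rw [if_pos h.le, if_neg h.ne, zero_pow (by omega), mul_zero]
  · rw [if_pos h.le, if_pos h, show k - a = b by omega, Nat.choose_self, Nat.sub_self, pow_zero,
      Nat.cast_one, mul_one, mul_one]
  · rw [if_neg (by omega), if_neg (by omega)]

lemma isUnit_Uq (q : ℕ) (z : ℝ) : IsUnit (Uq q z) := by
  have hlower : (Uq q z).IsLowerTriangular := fun a c (hac : a < c) => by
    simp [Uq_apply, Nat.descFactorial_eq_zero_iff_lt.2 hac]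
  rw [isUnit_iff_isUnit_det, det_of_isLowerTriangular _ hlower, isUnit_iff_ne_zero,
    prod_ne_zero_iff]
  intro a _
  simp [Uq_apply, Nat.descFactorial_self, Nat.factorial_ne_zero]

lemma isUnit_Wrm (r : ℕ) (z : ℝ) : IsUnit (Wrm r z) := by
  have hupper : (Wrm r z).IsUpperTriangular := fun d b (hbd : b < d) => by
    simp [Wrm_apply, Nat.descFactorial_eq_zero_iff_lt.2 hbd]
  rw [isUnit_iff_isUnit_det, det_of_isUpperTriangular hupper, isUnit_iff_ne_zero,
    prod_ne_zero_iff]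
  intro b _
  simp [Wrm_apply, Nat.descFactorial_self, Nat.factorial_ne_zero]

lemma Md_eq_Uq_mul_Amat_mul_Wrm (q r k : ℕ) (z : ℝ) :
    Md q r k z = Uq q z * Amat q r k 0 * Wrm r z := by
  ext a b
  set f : ℕ → ℝ := fun c => iteratedDeriv c (fun t : ℝ => t ^ (a : ℕ)) z
  set g : ℕ → ℝ := fun d => iteratedDeriv d (fun t : ℝ => t ^ (b : ℕ)) z
  have leibniz : Md q r k z a b = ∑ p ∈ antidiagonal k, (k.choose p.1 : ℝ) * f p.1 * g p.2 := by
    simp only [Md, of_apply, pow_add]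
    rw [iteratedDeriv_fun_mul (by fun_prop) (by fun_prop),
      Nat.sum_antidiagonal_eq_sum_range_succ_mk]
  have product : (Uq q z * Amat q r k 0 * Wrm r z) a b = ∑ p ∈ range q ×ˢ range r,
      if p ∈ antidiagonal k then (k.choose p.1 : ℝ) * f p.1 * g p.2 else 0 := by
    rw [Matrix.mul_assoc, mul_apply, sum_product, ← Fin.sum_univ_eq_sum_range]
    refine sum_congr rfl fun c _ => ?_
    rw [mul_apply, mul_sum, ← Fin.sum_univ_eq_sum_range]
    refine sum_congr rfl fun d _ => ?_
    rw [Amat_zero_apply]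
    split_ifs <;> simp only [Uq, Wrm, of_apply, f, g] <;> ring
  rw [leibniz, product, sum_ite_mem, inter_comm]
  -- the Leibniz terms outside `range q ×ˢ range r` differentiate `t ^ a` or `t ^ b` too often
  refine (sum_subset inter_subset_left fun p hk hpqr => ?_).symm
  have hpqr : ¬(p.1 < q ∧ p.2 < r) := by simpa [hk] using hpqr
  rcases not_and_or.1 hpqr with hq | hr
  · simp [f, Nat.descFactorial_eq_zero_iff_lt.2 (a.2.trans_le (not_lt.1 hq))]
  · simp [g, Nat.descFactorial_eq_zero_iff_lt.2 (b.2.trans_le (not_lt.1 hr))]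

lemma Mcal_eq_kronecker (q r μ ν : ℕ) (z : ℝ) :
    Mcal q r μ ν z =
      ((1 : Matrix (Fin μ) (Fin μ) ℝ) ⊗ₖ Uq q z) * Acal q r μ ν 0 *
        ((1 : Matrix (Fin ν) (Fin ν) ℝ) ⊗ₖ Wrm r z) := by
  ext ⟨i, a⟩ ⟨j, b⟩
  rw [one_kronecker_mul_mul_one_kronecker_apply]
  exact congrFun₂ (Md_eq_Uq_mul_Amat_mul_Wrm q r (i + j) z) a b

/-- The `((i, a), (j, b))` entry of `𝒜(0)` is the coefficient of `x^a y^b` in `(x+y)^i (x+y)^j`.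
Expanding `(x+y)^i = ∑ₛ C(i,s) x^{i-s} y^s` and `(x+y)^j = ∑ₜ C(j,t) x^t y^{j-t}` factors `𝒜(0)`
through the pairs `(s, t)`; here `s ≤ min(i, b) < min(μ, r)` and `t ≤ min(j, a) < min(ν, q)`. -/
def binomialFactor (q r μ ν : ℕ) : Matrix (Fin μ × Fin q) (Fin (min μ r) × Fin (min ν q)) ℝ :=
  of fun p s =>
    if (s.1 : ℕ) ≤ p.1 ∧ (p.2 : ℕ) = p.1 - s.1 + s.2 then ((p.1 : ℕ).choose s.1 : ℝ) else 0

lemma binomialFactor_ne_zero_iff {q r μ ν : ℕ} (p : Fin μ × Fin q)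
    (s : Fin (min μ r) × Fin (min ν q)) :
    binomialFactor q r μ ν p s ≠ 0 ↔ (s.1 : ℕ) ≤ p.1 ∧ (p.2 : ℕ) = p.1 - s.1 + s.2 := by
  simp only [binomialFactor, of_apply, ite_ne_right_iff, Nat.cast_ne_zero,
    and_iff_left_iff_imp]
  exact fun h => (Nat.choose_pos h.1).ne'

lemma binomialFactor_mul_binomialFactor_transpose (q r μ ν : ℕ) :
    binomialFactor q r μ ν * (binomialFactor r q ν μ)ᵀ.submatrix Prod.swap id =
      Acal q r μ ν 0 := by
  ext ⟨i, a⟩ ⟨j, b⟩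
  simp only [mul_apply, submatrix_apply, transpose_apply, id, Acal, of_apply, Amat_zero_apply,
    HasAntidiagonal.mem_antidiagonal]
  have support : ∀ s : Fin (min μ r) × Fin (min ν q),
      binomialFactor q r μ ν (i, a) s * binomialFactor r q ν μ (j, b) s.swap ≠ 0 →
      ((s.1 : ℕ) ≤ i ∧ (a : ℕ) = i - s.1 + s.2) ∧ ((s.2 : ℕ) ≤ j ∧ (b : ℕ) = j - s.2 + s.1) :=
    fun s hs => by
      rwa [mul_ne_zero_iff, binomialFactor_ne_zero_iff, binomialFactor_ne_zero_iff] at hs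
  split_ifs with hab
  · rw [Nat.add_choose_eq, Nat.cast_sum]
    refine sum_bij_ne_zero (fun s _ _ => ((i : ℕ) - s.1, (s.2 : ℕ))) ?_ ?_ ?_ ?_
    · intro s _ hs
      obtain ⟨⟨-, ha⟩, -⟩ := support s hs
      rw [HasAntidiagonal.mem_antidiagonal]
      omega
    · intro s _ hs t _ ht hst
      obtain ⟨⟨hs1, -⟩, -⟩ := support s hs
      obtain ⟨⟨ht1, -⟩, -⟩ := support t ht
      simp only [Prod.mk.injEq] at hst
      exact Prod.ext (Fin.ext (by omega)) (Fin.ext hst.2)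
    · intro u hu hne
      rw [HasAntidiagonal.mem_antidiagonal] at hu
      have hui : u.1 ≤ i := by
        by_contra h
        simp [Nat.choose_eq_zero_of_lt (not_le.1 h)] at hne
      have huj : u.2 ≤ j := by
        by_contra h
        simp [Nat.choose_eq_zero_of_lt (not_le.1 h)] at hne
      refine ⟨(⟨i - u.1, lt_min (by omega) (by omega)⟩, ⟨u.2, lt_min (by omega) (by omega)⟩),
        mem_univ _, ?_, by simp only [Nat.sub_sub_self hui]⟩
      rw [mul_ne_zero_iff, binomialFactor_ne_zero_iff, binomialFactor_ne_zero_iff]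
      simp only [Prod.fst_swap, Prod.snd_swap]
      exact ⟨⟨Nat.sub_le _ _, by omega⟩, huj, by omega⟩
    · intro s _ hs
      obtain ⟨⟨hs1, ha⟩, hs2, hb⟩ := support s hs
      simp only [binomialFactor, of_apply, Prod.fst_swap, Prod.snd_swap]
      rw [if_pos ⟨hs1, ha⟩, if_pos ⟨hs2, hb⟩, Nat.choose_symm hs1, Nat.cast_mul]
  · refine sum_eq_zero fun s _ => ?_
    by_contra hs
    have := support s hs
    omega

lemma det_binomialFactor_submatrix (q r μ ν : ℕ) :
    ((binomialFactor q r μ ν).submatrix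
      (Prod.map (Fin.castLE (min_le_left μ r)) (Fin.castLE (min_le_right ν q))) id).det = 1 := by
  refine BlockTriangular.det_eq_one (b := fun s => OrderDual.toDual (s.1 : ℕ)) ?_ ?_
  · intro s t (hst : (s.1 : ℕ) < t.1)
    simp only [submatrix_apply, binomialFactor, of_apply, Prod.map_fst, Fin.val_castLE, id]
    rw [if_neg (by omega)]
  · intro s t (hst : (s.1 : ℕ) = t.1)
    simp only [submatrix_apply, binomialFactor, of_apply, Prod.map_fst, Prod.map_snd,
      Fin.val_castLE, id, one_apply, Prod.ext_iff, Fin.ext_iff, hst, le_refl, Nat.sub_self,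
      zero_add, true_and, Nat.choose_self, Nat.cast_one]

lemma rank_Acal_zero (q r μ ν : ℕ) : (Acal q r μ ν 0).rank = min μ r * min ν q := by
  rw [← binomialFactor_mul_binomialFactor_transpose,
    rank_mul_eq_card_of_isUnit_submatrix _ _
      (Prod.map (Fin.castLE (min_le_left μ r)) (Fin.castLE (min_le_right ν q)))
      (Prod.map (Fin.castLE (min_le_left ν q)) (Fin.castLE (min_le_right μ r)) ∘ Prod.swap)]
  · simp
  · rw [isUnit_iff_isUnit_det, det_binomialFactor_submatrix]
    exact isUnit_one
  -- the square part of the right factor is a transposed, coordinate-swapped copy of the left one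
  · have hdet := det_submatrix_equiv_self (Equiv.prodComm _ _)
      ((binomialFactor r q ν μ).submatrix
        (Prod.map (Fin.castLE (min_le_left ν q)) (Fin.castLE (min_le_right μ r))) id)ᵀ
    rw [det_transpose, det_binomialFactor_submatrix] at hdet
    exact (isUnit_iff_isUnit_det _).2 (hdet ▸ isUnit_one)

theorem statement5_general (q r μ ν : ℕ) :
    ∀ z : ℝ,
      Mcal q r μ ν z =
        ((1 : Matrix (Fin μ) (Fin μ) ℝ) ⊗ₖ Uq q z) * Acal q r μ ν 0 *
          ((1 : Matrix (Fin ν) (Fin ν) ℝ) ⊗ₖ Wrm r z) ∧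
      (Mcal q r μ ν z).rank = (Acal q r μ ν 0).rank ∧
      (Mcal q r μ ν z).rank = min μ r * min ν q := by
  intro z
  have hU : IsUnit ((1 : Matrix (Fin μ) (Fin μ) ℝ) ⊗ₖ Uq q z).det :=
    (isUnit_iff_isUnit_det _).1 (isUnit_one.kronecker (isUnit_Uq q z))
  have hW : IsUnit ((1 : Matrix (Fin ν) (Fin ν) ℝ) ⊗ₖ Wrm r z).det :=
    (isUnit_iff_isUnit_det _).1 (isUnit_one.kronecker (isUnit_Wrm r z))
  have hrank : (Mcal q r μ ν z).rank = (Acal q r μ ν 0).rank := by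
    rw [Mcal_eq_kronecker, rank_mul_eq_left_of_isUnit_det _ _ hW,
      rank_mul_eq_right_of_isUnit_det _ _ hU]
  exact ⟨Mcal_eq_kronecker q r μ ν z, hrank, hrank.trans (rank_Acal_zero q r μ ν)⟩

theorem statement5 (q r μ ν : ℕ) (hq : 0 < q) (hr : 0 < r) (hμ : 0 < μ) (hν : 0 < ν) :
    ∀ z : ℝ,
      Mcal q r μ ν z =
        ((1 : Matrix (Fin μ) (Fin μ) ℝ) ⊗ₖ Uq q z) * Acal q r μ ν 0 *
          ((1 : Matrix (Fin ν) (Fin ν) ℝ) ⊗ₖ Wrm r z) ∧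
      (Mcal q r μ ν z).rank = (Acal q r μ ν 0).rank ∧
      (Mcal q r μ ν z).rank = min μ r * min ν q :=
  statement5_general q r μ ν
end
end

section
/- For every z ∈ ℝ: (i) for every j ≥ 1, (1/j!)·(M^{(j)}(z) − u^{(j)}(z)·w(z)) = (1/(j−1)!)·M^{(j−1)}(z)·G(z); (ii) for every j ≥ q, (1/j!)·M^{(j)}(z) = (1/(j−1)!)·M^{(j−1)}(z)·G(z); (iii) for all m, p ≥ 0, M^{(q−1+p+m)}(z)/(q−1+p+m)! = (M^{(q−1+m)}(z)/(q−1+m)!)·G(z)^p = (M^{(q−1)}(z)/(q−1)!)·G(z)^{p+m}. -/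
/-! Entrywise, `M^{(j)}(z)/j!` has `(a, b)` entry `C(a+b, j) z^{a+b-j}`, while the `(a, b)` entry
of `M^{(j-1)}(z) G(z)/(j-1)!` is `(∑_{i<b} C(a+i, j-1)) z^{a+b-j}`. By the hockey-stick identity
this sum is `C(a+b, j) - C(a, j)`, and `C(a, j) z^{a-j} z^b` is the entry of `u^{(j)}(z) w(z)/j!`;
this is (i). Since `u` has polynomial entries of degree `< q`, `u^{(j)} = 0` for `j ≥ q`, so (i)
becomes (ii), and iterating (ii) gives (iii). -/

open Matrix Kronecker

noncomputable section

open Finset Nat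

lemma one_div_factorial_mul_iteratedDeriv_pow {𝕜 : Type*} [NontriviallyNormedField 𝕜]
    [CharZero 𝕜] (m k : ℕ) (x : 𝕜) :
    1 / (k ! : 𝕜) * iteratedDeriv k (· ^ m) x = m.choose k * x ^ (m - k) := by
  rw [iteratedDeriv_pow, Nat.descFactorial_eq_factorial_mul_choose, Nat.cast_mul, ← mul_assoc,
    ← mul_assoc, one_div_mul_cancel (Nat.cast_ne_zero.2 (factorial_ne_zero k)), one_mul]

/-- Where `x ^ (n - k)` is a junk value, that is `n < k`, the binomial coefficient vanishes. -/
lemma choose_mul_pow_sub_mul_pow {R : Type*} [CommSemiring R] (n k m : ℕ) (x : R) :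
    (n.choose k : R) * x ^ (n - k) * x ^ m = n.choose k * x ^ (n + m - k) := by
  rcases le_or_gt k n with h | h
  · rw [mul_assoc, ← pow_add, Nat.sub_add_comm h]
  · simp [Nat.choose_eq_zero_of_lt h]

lemma Nat.sum_range_choose_add_choose (a t b : ℕ) :
    ∑ i ∈ range b, (a + i).choose t + a.choose (t + 1) = (a + b).choose (t + 1) := by
  induction b with
  | zero => simp
  | succ b ih => rw [sum_range_succ, add_right_comm, ih, ← add_assoc, Nat.choose_succ_succ']; ring

section TaylorCoefficients

variable {q r : ℕ} (z : ℝ)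

lemma one_div_factorial_smul_Md_apply (j : ℕ) (a : Fin q) (b : Fin r) :
    ((1 / (j ! : ℝ)) • Md q r j z) a b
      = ((a + b : ℕ).choose j) * z ^ ((a + b : ℕ) - j) := by
  simp only [Md, Matrix.smul_apply, of_apply, smul_eq_mul]
  exact one_div_factorial_mul_iteratedDeriv_pow _ _ _

lemma one_div_factorial_smul_vecMulVec_apply (j : ℕ) (a : Fin q) (b : Fin r) :
    ((1 / (j ! : ℝ)) • vecMulVec (ud q j z) (wv r z)) a b
      = ((a : ℕ).choose j) * z ^ ((a : ℕ) - j) * z ^ (b : ℕ) := by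
  simp only [ud, wv, Matrix.smul_apply, vecMulVec_apply, smul_eq_mul, ← mul_assoc]
  rw [one_div_factorial_mul_iteratedDeriv_pow]

lemma one_div_factorial_smul_Md_mul_Gm_apply (t : ℕ) (a : Fin q) (b : Fin r) :
    ((1 / (t ! : ℝ)) • Md q r t z * Gm r z) a b
      = (∑ i ∈ range b, ((a + i : ℕ).choose t : ℝ)) * z ^ ((a + b : ℕ) - (t + 1)) := by
  have hfilter : (range r).filter (· < (b : ℕ)) = range b := by
    ext i
    simp only [mem_filter, mem_range]
    omega
  simp only [mul_apply, one_div_factorial_smul_Md_apply, Gm, of_apply, mul_ite, mul_zero]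
  rw [Fin.sum_univ_eq_sum_range (fun i => if i < (b : ℕ) then
    ((a + i : ℕ).choose t : ℝ) * z ^ ((a + i : ℕ) - t) * z ^ ((b : ℕ) - i - 1) else 0),
    ← sum_filter, hfilter, sum_mul]
  refine sum_congr rfl fun i hi => ?_
  rw [choose_mul_pow_sub_mul_pow]
  congr 2
  have := mem_range.1 hi
  omega

lemma ud_eq_zero_of_le {j : ℕ} (h : q ≤ j) : ud q j z = 0 := by
  funext a
  simp [ud, Nat.descFactorial_eq_zero_iff_lt.2 (a.isLt.trans_le h)]

lemma one_div_factorial_smul_Md_succ_sub_vecMulVec (t : ℕ) :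
    (1 / ((t + 1) ! : ℝ)) • (Md q r (t + 1) z - vecMulVec (ud q (t + 1) z) (wv r z))
      = (1 / (t ! : ℝ)) • Md q r t z * Gm r z := by
  ext a b
  rw [smul_sub, Matrix.sub_apply, one_div_factorial_smul_Md_apply,
    one_div_factorial_smul_vecMulVec_apply, choose_mul_pow_sub_mul_pow,
    one_div_factorial_smul_Md_mul_Gm_apply, ← sub_mul,
    ← Nat.sum_range_choose_add_choose]
  push_cast
  ring

lemma one_div_factorial_smul_Md_succ {t : ℕ} (h : q ≤ t + 1) :
    (1 / ((t + 1) ! : ℝ)) • Md q r (t + 1) z = (1 / (t ! : ℝ)) • Md q r t z * Gm r z := by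
  simpa [ud_eq_zero_of_le z h] using
    one_div_factorial_smul_Md_succ_sub_vecMulVec (q := q) (r := r) z t

end TaylorCoefficients

lemma Matrix.eq_mul_pow_of_succ_eq_mul {m n R : Type*} [Fintype n] [DecidableEq n] [Semiring R]
    {X : ℕ → Matrix m n R} {g : Matrix n n R} {n₀ : ℕ}
    (h : ∀ k, n₀ ≤ k → X (k + 1) = X k * g) {k : ℕ} (hk : n₀ ≤ k) (p : ℕ) :
    X (k + p) = X k * g ^ p := by
  induction p with
  | zero => simp
  | succ p ih => rw [← add_assoc, h _ (by omega), ih, pow_succ, Matrix.mul_assoc]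

theorem statement11_general (q r : ℕ) (hq : 0 < q) :
    ∀ z : ℝ,
      (∀ j : ℕ, 1 ≤ j →
        (1 / (Nat.factorial j : ℝ)) • (Md q r j z - Matrix.vecMulVec (ud q j z) (wv r z)) =
          (1 / (Nat.factorial (j - 1) : ℝ)) • (Md q r (j - 1) z * Gm r z)) ∧
      (∀ j : ℕ, q ≤ j →
        (1 / (Nat.factorial j : ℝ)) • Md q r j z =
          (1 / (Nat.factorial (j - 1) : ℝ)) • (Md q r (j - 1) z * Gm r z)) ∧
      (∀ m p : ℕ,
        (1 / (Nat.factorial (q - 1 + p + m) : ℝ)) • Md q r (q - 1 + p + m) z =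
          (1 / (Nat.factorial (q - 1 + m) : ℝ)) • (Md q r (q - 1 + m) z * (Gm r z) ^ p) ∧
        (1 / (Nat.factorial (q - 1 + m) : ℝ)) • (Md q r (q - 1 + m) z * (Gm r z) ^ p) =
          (1 / (Nat.factorial (q - 1) : ℝ)) • (Md q r (q - 1) z * (Gm r z) ^ (p + m))) := by
  intro z
  have step : ∀ k, q - 1 ≤ k →
      (1 / ((k + 1) ! : ℝ)) • Md q r (k + 1) z = (1 / (k ! : ℝ)) • Md q r k z * Gm r z :=
    fun k hk => one_div_factorial_smul_Md_succ z (by omega)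
  refine ⟨fun j hj => ?_, fun j hj => ?_, fun m p => ?_⟩
  · obtain ⟨t, rfl⟩ := Nat.exists_eq_add_of_le' hj
    simpa [smul_mul] using one_div_factorial_smul_Md_succ_sub_vecMulVec z t
  · obtain ⟨t, rfl⟩ := Nat.exists_eq_add_of_le' (hq.trans_le hj)
    simpa [smul_mul] using step t (by omega)
  · have power := fun k (hk : q - 1 ≤ k) p =>
      eq_mul_pow_of_succ_eq_mul (X := fun k => (1 / (k ! : ℝ)) • Md q r k z) step hk p
    simp only [← smul_mul]
    rw [add_right_comm, power _ (by omega), power _ le_rfl, Matrix.mul_assoc, ← pow_add,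
      add_comm m]
    exact ⟨rfl, rfl⟩

theorem statement11 (q r : ℕ) (hq : 0 < q) (hr : 0 < r) :
    ∀ z : ℝ,
      (∀ j : ℕ, 1 ≤ j →
        (1 / (Nat.factorial j : ℝ)) • (Md q r j z - Matrix.vecMulVec (ud q j z) (wv r z)) =
          (1 / (Nat.factorial (j - 1) : ℝ)) • (Md q r (j - 1) z * Gm r z)) ∧
      (∀ j : ℕ, q ≤ j →
        (1 / (Nat.factorial j : ℝ)) • Md q r j z =
          (1 / (Nat.factorial (j - 1) : ℝ)) • (Md q r (j - 1) z * Gm r z)) ∧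
      (∀ m p : ℕ,
        (1 / (Nat.factorial (q - 1 + p + m) : ℝ)) • Md q r (q - 1 + p + m) z =
          (1 / (Nat.factorial (q - 1 + m) : ℝ)) • (Md q r (q - 1 + m) z * (Gm r z) ^ p) ∧
        (1 / (Nat.factorial (q - 1 + m) : ℝ)) • (Md q r (q - 1 + m) z * (Gm r z) ^ p) =
          (1 / (Nat.factorial (q - 1) : ℝ)) • (Md q r (q - 1) z * (Gm r z) ^ (p + m))) :=
  statement11_general q r hq
end
end

section
/- Assume r ≥ 2 and q+1 ≤ ν ≤ q+r−1. Let K̄(z) ∈ ℝ^{νr×(νr−q)} be the block matrix K̄(z) = [[I_q⊗F(z) + S_q⊗F'(z), −ℓ_q·f^T ⊗ G(z)], [0, I_{ν−q}⊗I_r − S_{ν−q}⊗G(z)]], where ℓ_q is the last standard basis column vector of ℝ^q and f is the first standard basis column vector of ℝ^{ν−q}. Then for every z ∈ ℝ: 𝓝^0(z)·K̄(z) = 0, K̄(z) has full column rank νr − q, and the columns of K̄(z) form a basis of the kernel of 𝓝^0(z); in particular dim ker 𝓝^0(z) = νr − q. -/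
open Matrix Kronecker

noncomputable section

/-!
Writing `taylorCoeff z n c = C(n, c) z ^ (n - c)`, the entry of `𝓝^0(z)` in row `a` and column
`(i, b)` is `taylorCoeff z (a + b) i`. Each `F`-column of `K̄(z)` encodes Pascal's rule for these
coefficients and each `G`-column its iterate, a hockey-stick identity; hence `𝓝^0 K̄ = 0`.
`K̄(z)` is block upper bidiagonal with injective diagonal blocks `F(z)` and `I_r`, hence
injective, while `𝓝^0(z)` is surjective because its columns `(j, 0)`, `j < q`, form a
unitriangular matrix. The dimensions of the range of `K̄(z)` and the kernel of `𝓝^0(z)` are then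
both `νr − q`.
-/

/-- The coefficient of `h ^ c` in `(z + h) ^ n`. -/
def taylorCoeff (z : ℝ) (n c : ℕ) : ℝ := n.choose c * z ^ (n - c)

theorem taylorCoeff_eq_zero_of_lt {z : ℝ} {n c : ℕ} (h : n < c) : taylorCoeff z n c = 0 := by
  simp [taylorCoeff, Nat.choose_eq_zero_of_lt h]

theorem taylorCoeff_self (z : ℝ) (n : ℕ) : taylorCoeff z n n = 1 := by
  simp [taylorCoeff]

theorem taylorCoeff_succ_zero (z : ℝ) (n : ℕ) :
    taylorCoeff z (n + 1) 0 = z * taylorCoeff z n 0 := by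
  simp [taylorCoeff, pow_succ, mul_comm]

theorem taylorCoeff_succ_succ (z : ℝ) (n c : ℕ) :
    taylorCoeff z (n + 1) (c + 1) = z * taylorCoeff z n (c + 1) + taylorCoeff z n c := by
  rcases lt_trichotomy n c with h | rfl | h
  · simp [taylorCoeff_eq_zero_of_lt, h, h.trans (Nat.lt_succ_self c)]
  · simp [taylorCoeff]
  · obtain ⟨d, rfl⟩ := Nat.exists_eq_add_of_lt h
    simp only [taylorCoeff, Nat.choose_succ_succ', Nat.cast_add]
    rw [show c + d + 1 + 1 - (c + 1) = d + 1 by omega, show c + d + 1 - (c + 1) = d by omega,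
      show c + d + 1 - c = d + 1 by omega, pow_succ]
    ring

theorem taylorCoeff_add_succ (z : ℝ) (n m k : ℕ) :
    taylorCoeff z (n + k) (m + 1) = z ^ k * taylorCoeff z n (m + 1) +
      ∑ b ∈ Finset.range k, z ^ (k - 1 - b) * taylorCoeff z (n + b) m := by
  induction k with
  | zero => simp
  | succ k ih =>
    have hsum : z * ∑ b ∈ Finset.range k, z ^ (k - 1 - b) * taylorCoeff z (n + b) m =
        ∑ b ∈ Finset.range k, z ^ (k - b) * taylorCoeff z (n + b) m := by
      rw [Finset.mul_sum]
      refine Finset.sum_congr rfl fun b hb => ?_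
      rw [show k - b = k - 1 - b + 1 by simp at hb; omega, pow_succ]
      ring
    rw [← add_assoc, taylorCoeff_succ_succ, ih, mul_add, hsum, Finset.sum_range_succ,
      Nat.add_sub_cancel, Nat.sub_self, pow_zero, one_mul, pow_succ]
    ring

theorem det_taylorCoeff (q : ℕ) (z : ℝ) :
    (Matrix.of fun a j : Fin q => taylorCoeff z a j).det = 1 := by
  have hlower : (Matrix.of fun a j : Fin q => taylorCoeff z a j).IsLowerTriangular :=
    fun a j h => taylorCoeff_eq_zero_of_lt (Fin.lt_def.1 (OrderDual.toDual_lt_toDual.1 h))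
  rw [Matrix.det_of_isLowerTriangular _ hlower]
  simp [taylorCoeff_self]

theorem Fin.sum_ite_val_eq {M : Type*} [AddCommMonoid M] {n : ℕ} (k : ℕ) (g : Fin n → M) :
    ∑ i : Fin n, (if (i : ℕ) = k then g i else 0) = if h : k < n then g ⟨k, h⟩ else 0 := by
  split_ifs with h
  · simp [← Fin.ext_iff (b := ⟨k, h⟩)]
  · exact Finset.sum_eq_zero fun i _ => if_neg (i.isLt.trans_le (not_lt.1 h)).ne

theorem Fin.sum_ite_eq_val {M : Type*} [AddCommMonoid M] {n : ℕ} (k : ℕ) (g : Fin n → M) :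
    ∑ i : Fin n, (if k = (i : ℕ) then g i else 0) = if h : k < n then g ⟨k, h⟩ else 0 := by
  simp_rw [eq_comm (a := k)]
  exact Fin.sum_ite_val_eq k g

theorem Fin.sum_ite_val_lt {M : Type*} [AddCommMonoid M] {n k : ℕ} (hk : k ≤ n) (f : ℕ → M) :
    ∑ i : Fin n, (if (i : ℕ) < k then f i else 0) = ∑ i ∈ Finset.range k, f i := by
  rw [Fin.sum_univ_eq_sum_range (fun i => if i < k then f i else 0), ← Finset.sum_filter]
  congr 1
  ext
  simp only [Finset.mem_filter, Finset.mem_range]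
  omega

theorem Fm_apply (r : ℕ) (z : ℝ) (a : Fin r) (b : Fin (r - 1)) :
    Fm r z a b = (if (a : ℕ) = b then -z else 0) + (if (a : ℕ) = b + 1 then 1 else 0) := by
  simp only [Fm, Matrix.of_apply]
  split_ifs <;> first | omega | ring

theorem eq_zero_of_Fm_mulVec_eq_zero {r : ℕ} {z : ℝ} {y : Fin (r - 1) → ℝ}
    (hy : Fm r z *ᵥ y = 0) : y = 0 := by
  have row : ∀ b (hb : b < r - 1),
      (if h : b + 1 < r - 1 then -(z * y ⟨b + 1, h⟩) else 0) + y ⟨b, hb⟩ = 0 := by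
    intro b hb
    have := congrFun hy ⟨b + 1, by omega⟩
    simpa [Matrix.mulVec, dotProduct, Fm_apply, add_mul, ite_mul, Finset.sum_add_distrib,
      Fin.sum_ite_eq_val, dif_pos hb] using this
  suffices ∀ n b (hb : b < r - 1), r - 1 ≤ b + 1 + n → y ⟨b, hb⟩ = 0 from
    funext fun b => this (r - 1) b b.isLt (by omega)
  intro n
  induction n with
  | zero =>
    intro b hb hbn
    simpa [dif_neg (show ¬ b + 1 < r - 1 by omega)] using row b hb
  | succ n ih =>
    intro b hb hbn
    by_cases hlast : b + 1 < r - 1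
    · simpa [dif_pos hlast, ih (b + 1) hlast (by omega)] using row b hb
    · simpa [dif_neg hlast] using row b hb

section Kbar

variable {q r ν : ℕ}

theorem Ncal0_apply (z : ℝ) (a : Fin q) (p : Fin ν × Fin r) :
    Ncal0 q r ν z a p = taylorCoeff z (a + p.2) p.1 := by
  have : ((p.1 : ℕ).factorial : ℝ) ≠ 0 := by positivity
  simp only [Ncal0, Md, Matrix.of_apply, iteratedDeriv_pow, taylorCoeff,
    Nat.descFactorial_eq_factorial_mul_choose, Nat.cast_mul]
  field_simp

theorem Ncal0_mul_Kbar_inl (hqν : q ≤ ν) (z : ℝ) (a c : Fin q) (k : Fin (r - 1)) :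
    (Ncal0 q r ν z * Kbar q r ν z) a (Sum.inl (c, k)) = 0 := by
  have hk : (k : ℕ) + 1 < r := by omega
  simp only [Matrix.mul_apply, Fintype.sum_prod_type, Ncal0_apply, Kbar, Fm_apply, Fm',
    Matrix.of_apply, mul_add, mul_ite, mul_zero, Finset.sum_add_distrib, Finset.sum_ite_irrel,
    Finset.sum_const_zero, Fin.sum_ite_val_eq, dif_pos hk,
    dif_pos (k.isLt.trans_le (Nat.sub_le r 1))]
  rcases c with ⟨_ | c, hc⟩
  · simp only [mul_neg, ← add_assoc, taylorCoeff_succ_zero, mul_one,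
      dif_pos (show 0 < ν by omega), Nat.add_eq_zero_iff, one_ne_zero, and_false, ↓reduceIte,
      Finset.sum_const_zero, add_zero]
    ring
  · simp only [mul_neg, ← add_assoc, taylorCoeff_succ_succ, mul_one,
      dif_pos (show c + 1 < ν by omega), Nat.add_right_cancel_iff, Fin.sum_ite_val_eq,
      show c < ν by omega, ↓reduceDIte]
    ring

theorem Ncal0_mul_Kbar_inr (z : ℝ) (a : Fin q) (d : Fin (ν - q)) (k : Fin r) :
    (Ncal0 q r ν z * Kbar q r ν z) a (Sum.inr (d, k)) = 0 := by
  set m := q + (d : ℕ) - 1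
  have hm : q + (d : ℕ) = m + 1 := by have := a.isLt; omega
  simp only [Matrix.mul_apply, Fintype.sum_prod_type, Ncal0_apply, Kbar, Gm,
    Matrix.of_apply, mul_add, mul_ite, mul_zero, Finset.sum_add_distrib, Finset.sum_ite_irrel,
    Finset.sum_const_zero, Fin.sum_ite_val_eq, hm, Nat.add_right_cancel_iff, mul_one, mul_neg,
    Finset.sum_neg_distrib, Finset.sum_ite_eq', Finset.mem_univ, if_true,
    dif_pos (show m + 1 < ν by omega), dif_pos (show m < ν by omega),
    Fin.sum_ite_val_lt k.isLt.le (fun b => taylorCoeff z (a + b) m * z ^ ((k : ℕ) - b - 1))]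
  rw [taylorCoeff_add_succ, taylorCoeff_eq_zero_of_lt (show (a : ℕ) < m + 1 by omega)]
  simp [Nat.sub_right_comm, mul_comm]

theorem Ncal0_mul_Kbar (hqν : q ≤ ν) (z : ℝ) : Ncal0 q r ν z * Kbar q r ν z = 0 := by
  ext a (⟨c, k⟩ | ⟨d, k⟩)
  · exact Ncal0_mul_Kbar_inl hqν z a c k
  · exact Ncal0_mul_Kbar_inr z a d k

variable (q r ν) in
/-- The block index of a column `s` of `Kbar`: its nonzero entries lie in the block rows
`kbarBlock s` and `kbarBlock s - 1`. -/
def kbarBlock : (Fin q × Fin (r - 1)) ⊕ (Fin (ν - q) × Fin r) → ℕ :=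
  Sum.elim (fun c => c.1) (fun c => q + c.1)

theorem Kbar_apply_mul_eq_zero {z : ℝ} {x : (Fin q × Fin (r - 1)) ⊕ (Fin (ν - q) × Fin r) → ℝ}
    {p : Fin ν × Fin r} {s : (Fin q × Fin (r - 1)) ⊕ (Fin (ν - q) × Fin r)}
    (hs : kbarBlock q r ν s ≠ p.1) (hx : (p.1 : ℕ) < kbarBlock q r ν s → x s = 0) :
    Kbar q r ν z p s * x s = 0 := by
  rcases lt_or_gt_of_ne hs with hlt | hgt
  · refine mul_eq_zero_of_left ?_ _
    rcases s with ⟨c, k⟩ | ⟨d, k⟩ <;> simp only [kbarBlock, Sum.elim_inl, Sum.elim_inr] at hlt <;>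
      simp only [Kbar, Matrix.of_apply] <;> rw [if_neg (by omega), if_neg (by omega), add_zero]
  · rw [hx hgt, mul_zero]

theorem Kbar_mulVec_inr_of_eq_zero_above {z : ℝ}
    {x : (Fin q × Fin (r - 1)) ⊕ (Fin (ν - q) × Fin r) → ℝ} (d : Fin (ν - q)) (b : Fin r)
    (hx : ∀ s, q + (d : ℕ) < kbarBlock q r ν s → x s = 0) :
    (Kbar q r ν z *ᵥ x) (⟨q + d, by omega⟩, b) = x (Sum.inr (d, b)) := by
  rw [Matrix.mulVec, dotProduct, Finset.sum_eq_single (Sum.inr (d, b))]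
  · simp [Kbar]
  · intro s _ hsd
    by_cases hs : kbarBlock q r ν s = q + d
    · rcases s with ⟨c, k⟩ | ⟨d', k⟩
      · simp only [kbarBlock, Sum.elim_inl] at hs
        omega
      · obtain rfl : d' = d := Fin.ext (by simpa [kbarBlock] using hs)
        have hkb : b ≠ k := fun h => hsd (h ▸ rfl)
        simp [Kbar, hkb]
    · exact Kbar_apply_mul_eq_zero hs (hx s)
  · simp

theorem Kbar_mulVec_inl_of_eq_zero_above (hqν : q ≤ ν) {z : ℝ}
    {x : (Fin q × Fin (r - 1)) ⊕ (Fin (ν - q) × Fin r) → ℝ} (i : Fin q) (b : Fin r)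
    (hx : ∀ s, (i : ℕ) < kbarBlock q r ν s → x s = 0) :
    (Kbar q r ν z *ᵥ x) (⟨i, by omega⟩, b) = (Fm r z *ᵥ fun k => x (Sum.inl (i, k))) b := by
  have hinr : ∑ s : Fin (ν - q) × Fin r,
      Kbar q r ν z (⟨i, by omega⟩, b) (Sum.inr s) * x (Sum.inr s) = 0 :=
    Finset.sum_eq_zero fun s _ =>
      Kbar_apply_mul_eq_zero (by simp only [kbarBlock, Sum.elim_inr]; omega) (hx (Sum.inr s))
  rw [Matrix.mulVec, dotProduct, Fintype.sum_sum_type, hinr, add_zero, Fintype.sum_prod_type,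
    Finset.sum_eq_single i]
  · simp [Kbar, Matrix.mulVec, dotProduct]
  · intro c _ hci
    refine Finset.sum_eq_zero fun k _ => Kbar_apply_mul_eq_zero ?_ (hx _)
    simpa [kbarBlock, Fin.ext_iff] using hci
  · simp

theorem eq_zero_of_Kbar_mulVec_eq_zero (hqν : q ≤ ν) {z : ℝ}
    {x : (Fin q × Fin (r - 1)) ⊕ (Fin (ν - q) × Fin r) → ℝ} (hKx : Kbar q r ν z *ᵥ x = 0) :
    x = 0 := by
  have hblock : ∀ s, kbarBlock q r ν s < ν := by
    rintro (⟨c, k⟩ | ⟨d, k⟩) <;> simp only [kbarBlock, Sum.elim_inl, Sum.elim_inr] <;> omega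
  suffices ∀ n s, ν ≤ kbarBlock q r ν s + n → x s = 0 from funext fun s => this ν s (by omega)
  intro n
  induction n with
  | zero => exact fun s hs => absurd (hblock s) (by omega)
  | succ n ih =>
    intro s hs
    have above : ∀ s', kbarBlock q r ν s < kbarBlock q r ν s' → x s' = 0 :=
      fun s' h => ih s' (by omega)
    rcases s with ⟨i, k⟩ | ⟨d, k⟩
    · have hFx : Fm r z *ᵥ (fun k => x (Sum.inl (i, k))) = 0 := funext fun b => by
        rw [← Kbar_mulVec_inl_of_eq_zero_above hqν i b above, hKx]
        rfl
      exact congrFun (eq_zero_of_Fm_mulVec_eq_zero hFx) k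
    · rw [← Kbar_mulVec_inr_of_eq_zero_above d k above, hKx]
      rfl

theorem Kbar_mulVecLin_injective (hqν : q ≤ ν) (z : ℝ) :
    Function.Injective (Kbar q r ν z).mulVecLin :=
  (injective_iff_map_eq_zero _).2 fun _ hx => eq_zero_of_Kbar_mulVec_eq_zero hqν hx

theorem Ncal0_mulVecLin_surjective (hr : 0 < r) (hqν : q ≤ ν) (z : ℝ) :
    Function.Surjective (Ncal0 q r ν z).mulVecLin := by
  let e : Fin q → Fin ν × Fin r := fun j => (Fin.castLE hqν j, ⟨0, hr⟩)
  let P := Matrix.of fun a j : Fin q => taylorCoeff z a j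
  have hP : Ncal0 q r ν z * (1 : Matrix (Fin ν × Fin r) (Fin ν × Fin r) ℝ).submatrix
      (Equiv.refl _) e = P := by
    rw [Matrix.mul_submatrix_one]
    ext a j
    simp [e, P, Ncal0_apply]
  have hPunit : IsUnit P.det := by simp [P, det_taylorCoeff]
  intro y
  refine ⟨(1 : Matrix (Fin ν × Fin r) (Fin ν × Fin r) ℝ).submatrix (Equiv.refl _) e *ᵥ
    (P⁻¹ *ᵥ y), ?_⟩
  rw [Matrix.mulVecLin_apply, Matrix.mulVec_mulVec, hP, Matrix.mulVec_mulVec,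
    Matrix.mul_nonsing_inv _ hPunit, Matrix.one_mulVec]

theorem finrank_ker_Ncal0 (hr : 0 < r) (hqν : q ≤ ν) (z : ℝ) :
    Module.finrank ℝ (LinearMap.ker (Ncal0 q r ν z).mulVecLin) = ν * r - q := by
  have := (Ncal0 q r ν z).mulVecLin.finrank_range_add_finrank_ker
  rw [LinearMap.range_eq_top.2 (Ncal0_mulVecLin_surjective hr hqν z), finrank_top] at this
  simp only [Module.finrank_fintype_fun_eq_card, Fintype.card_prod, Fintype.card_fin] at this
  omega

theorem card_Kbar_cols (hqν : q ≤ ν) :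
    Fintype.card ((Fin q × Fin (r - 1)) ⊕ (Fin (ν - q) × Fin r)) = ν * r - q := by
  obtain ⟨m, rfl⟩ := Nat.exists_eq_add_of_le hqν
  rcases r with _ | r
  · simp
  · simp only [Fintype.card_sum, Fintype.card_prod, Fintype.card_fin, Nat.add_sub_cancel,
      Nat.add_sub_cancel_left]
    symm
    apply Nat.sub_eq_of_eq_add
    ring

theorem finrank_range_Kbar (hqν : q ≤ ν) (z : ℝ) :
    Module.finrank ℝ (LinearMap.range (Kbar q r ν z).mulVecLin) = ν * r - q := by
  rw [LinearMap.finrank_range_of_inj (Kbar_mulVecLin_injective hqν z),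
    Module.finrank_fintype_fun_eq_card, card_Kbar_cols hqν]

end Kbar

theorem statement12_general (q r ν : ℕ) (hr : 2 ≤ r) (hν1 : q + 1 ≤ ν) :
    ∀ z : ℝ,
      Ncal0 q r ν z * Kbar q r ν z = 0 ∧
      (Kbar q r ν z).rank = ν * r - q ∧
      Function.Injective (Kbar q r ν z).mulVecLin ∧
      LinearMap.range (Kbar q r ν z).mulVecLin = LinearMap.ker (Ncal0 q r ν z).mulVecLin ∧
      Module.finrank ℝ (LinearMap.ker (Ncal0 q r ν z).mulVecLin) = ν * r - q := by
  intro z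
  have hqν : q ≤ ν := by omega
  have hNK : Ncal0 q r ν z * Kbar q r ν z = 0 := Ncal0_mul_Kbar hqν z
  have hker := finrank_ker_Ncal0 (show 0 < r by omega) hqν z
  have hrange : LinearMap.range (Kbar q r ν z).mulVecLin ≤
      LinearMap.ker (Ncal0 q r ν z).mulVecLin := by
    rw [LinearMap.range_le_ker_iff, ← Matrix.mulVecLin_mul, hNK, Matrix.mulVecLin_zero]
  refine ⟨hNK, finrank_range_Kbar hqν z, Kbar_mulVecLin_injective hqν z,
    Submodule.eq_of_le_of_finrank_eq hrange ((finrank_range_Kbar hqν z).trans hker.symm), hker⟩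

theorem statement12 (q r ν : ℕ) (hq : 0 < q) (hr : 2 ≤ r)
    (hν1 : q + 1 ≤ ν) (hν2 : ν ≤ q + r - 1) :
    ∀ z : ℝ,
      Ncal0 q r ν z * Kbar q r ν z = 0 ∧
      (Kbar q r ν z).rank = ν * r - q ∧
      Function.Injective (Kbar q r ν z).mulVecLin ∧
      LinearMap.range (Kbar q r ν z).mulVecLin = LinearMap.ker (Ncal0 q r ν z).mulVecLin ∧
      Module.finrank ℝ (LinearMap.ker (Ncal0 q r ν z).mulVecLin) = ν * r - q :=
  statement12_general q r ν hr hν1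
end
end
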